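/- Unsatisfiable abstractions are refinement-safe faithful: for any normal logic program Π over atoms 𝒜 and any A ⊆ 𝒜, if omit(Π,A) is unsatisfiable (AS(omit(Π,A)) = ∅), then for every A' ⊆ A the abstraction omit(Π,A') has no spurious answer sets. -/
import Mathlib


universe u

namespace ASP

/-- The head of a rule: falsity `⊥` (a constraint), a plain atom head,
or a choice head `{a}` (the common syntactic extension). -/
inductive Head (α : Type u) : Type u where
  | bot : Head α
  | atom : α → Head α
  | choice : α → Head α

/-- A (ground) rule with a head, a positive body `B⁺` and a
(default-)negated body `B⁻`. -/
structure Rule (α : Type u) : Type u where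
  head : Head α
  pos : Set α
  neg : Set α

/-- A (ground, propositional) program is a set of rules. -/
abbrev Program (α : Type u) : Type u := Set (Rule α)

def Head.atoms {α : Type u} : Head α → Set α
  | .bot => ∅
  | .atom a => {a}
  | .choice a => {a}

/-- `B±(r) = B⁺(r) ∪ B⁻(r)`. -/
def Rule.bodyAtoms {α : Type u} (r : Rule α) : Set α :=
  r.pos ∪ r.neg

def Rule.atoms {α : Type u} (r : Rule α) : Set α :=
  r.head.atoms ∪ r.bodyAtoms

/-- The program `P` uses only atoms from `𝒜`. -/
def ProgramOver {α : Type u} (P : Program α) (𝒜 : Set α) : Prop :=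
  ∀ r ∈ P, r.atoms ⊆ 𝒜

/-- A normal program: every head is an atom or `⊥` (no genuine choice heads). -/
def IsNormal {α : Type u} (P : Program α) : Prop :=
  ∀ r ∈ P, ∀ a : α, r.head ≠ Head.choice a

/-- `I ⊨ B(r)`, i.e. `B⁺(r) ⊆ I` and `B⁻(r) ∩ I = ∅`. -/
def bodySat {α : Type u} (I : Set α) (r : Rule α) : Prop :=
  r.pos ⊆ I ∧ ∀ a ∈ r.neg, a ∉ I

def headSat {α : Type u} (I : Set α) : Head α → Prop
  | .bot => False
  | .atom a => a ∈ I
  | .choice _ => True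

def isModel {α : Type u} (I : Set α) (P : Program α) : Prop :=
  ∀ r ∈ P, bodySat I r → headSat I r.head

/-- Satisfaction by `J` of the head of a rule of the FLP-reduct `P^I`.
A choice head `{a}` abbreviates the pair of rules `a ← B, not ā` and
`ā ← B, not a` for a fresh complement atom `ā`; projected onto the original
atoms this amounts to the condition `a ∈ I → a ∈ J`. -/
def headSatReduct {α : Type u} (I J : Set α) : Head α → Prop
  | .bot => False
  | .atom a => a ∈ J
  | .choice a => a ∈ I → a ∈ J

/-- `J` is a model of the FLP-reduct `P^I = {r ∈ P | I ⊨ B(r)}`. -/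
def satReduct {α : Type u} (J I : Set α) (P : Program α) : Prop :=
  ∀ r ∈ P, bodySat I r → bodySat J r → headSatReduct I J r.head

/-- `I` is an answer set of `P` iff `I` is a `⊆`-minimal model of the
FLP-reduct `P^I` (note that `I ⊨ P^I` iff `I ⊨ P`). -/
def isAnswerSet {α : Type u} (P : Program α) (I : Set α) : Prop :=
  isModel I P ∧ ∀ J ⊆ I, satReduct J I P → J = I

/-- `AS(P)`, the collection of answer sets of `P`. -/
def AS {α : Type u} (P : Program α) : Set (Set α) :=
  {I | isAnswerSet P I}

/-- The head is omitted, i.e. it is an atom (or choice atom) belonging to `A`;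
`⊥` is never in a set of omitted *atoms*. -/
def Head.omitted {α : Type u} (A : Set α) : Head α → Prop
  | .bot => False
  | .atom a => a ∈ A
  | .choice a => a ∈ A

def Head.toChoice {α : Type u} : Head α → Head α
  | .bot => .bot
  | .atom a => .choice a
  | .choice a => .choice a

/-- How a single rule `r` of the program is transformed into a rule `r'` of the
abstraction when the atoms in `A` are omitted:
(a) `r` is kept unchanged if it contains no omitted atom;
(b) if the body contains an omitted atom but the head is not omitted and not `⊥`,
the body is projected to the remaining atoms and the head becomes a choice;
(c) otherwise the rule is deleted (no `r'` is produced). -/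
def omitRel {α : Type u} (A : Set α) (r r' : Rule α) : Prop :=
  (r.bodyAtoms ∩ A = ∅ ∧ ¬ Head.omitted A r.head ∧ r' = r) ∨
  (r.bodyAtoms ∩ A ≠ ∅ ∧ ¬ Head.omitted A r.head ∧ r.head ≠ Head.bot ∧
    r' = ⟨Head.toChoice r.head, r.pos \ A, r.neg \ A⟩)

/-- The omission abstraction `omit(P, A)`. -/
def omitA {α : Type u} (P : Program α) (A : Set α) : Program α :=
  {r' | ∃ r ∈ P, omitRel A r r'}


section Aux

variable {α : Type u}

lemma Head.omitted_toChoice (A : Set α) (h : Head α) :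
    Head.omitted A h.toChoice ↔ Head.omitted A h := by
  cases h <;> simp [Head.toChoice, Head.omitted]

lemma Head.omitted_mono {A' A : Set α} (hs : A' ⊆ A) {h : Head α}
    (ho : Head.omitted A' h) : Head.omitted A h := by
  cases h <;> simp [Head.omitted] at ho ⊢ <;> exact hs ho

lemma Head.toChoice_ne_bot {h : Head α} (hb : h ≠ Head.bot) :
    h.toChoice ≠ Head.bot := by
  cases h <;> simp [Head.toChoice] at hb ⊢

lemma Head.toChoice_idem (h : Head α) : h.toChoice.toChoice = h.toChoice := by
  cases h <;> rfl

lemma diff_eq_of_inter_empty {s A' A : Set α} (hs : A' ⊆ A)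
    (hd : (s \ A') ∩ A = ∅) : s \ A' = s \ A := by
  apply Set.Subset.antisymm
  · intro x hx
    exact ⟨hx.1, fun hxA => Set.eq_empty_iff_forall_notMem.mp hd x ⟨hx, hxA⟩⟩
  · exact fun x hx => ⟨hx.1, fun hxA' => hx.2 (hs hxA')⟩

/-- Over-approximation: every answer set of `Q` projects to an answer set of
`omit(Q, B)`. -/
lemma project (Q : Program α) (B : Set α) {I : Set α}
    (hI : isAnswerSet Q I) : isAnswerSet (omitA Q B) (I \ B) := by
  obtain ⟨hmod, hmin⟩ := hI
  constructor
  · -- model part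
    rintro r' ⟨r, hr, hrel⟩ hb
    rcases hrel with ⟨hdis, hnom, req⟩ | ⟨hne, hnom, hbot, rfl⟩
    · rw [req] at hb
      have hbI : bodySat I r := by
        refine ⟨fun x hx => (hb.1 hx).1, fun a ha haI => ?_⟩
        have haB : a ∉ B := fun hB =>
          Set.eq_empty_iff_forall_notMem.mp hdis a ⟨Or.inr ha, hB⟩
        exact hb.2 a ha ⟨haI, haB⟩
      have hh := hmod r hr hbI
      rw [req]
      cases hhead : r.head with
      | bot => rw [hhead] at hh; exact hh.elim
      | atom a =>
        rw [hhead] at hh hnom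
        exact ⟨hh, fun hB => hnom hB⟩
      | choice a => trivial
    · cases hhead : r.head with
      | bot => exact absurd hhead hbot
      | atom a => simp only [hhead, Head.toChoice]; trivial
      | choice a => simp only [hhead, Head.toChoice]; trivial
  · -- minimality part
    intro Jh hsub hred
    set J : Set α := Jh ∪ (I ∩ B) with hJdef
    have hJI : J ⊆ I := by
      rintro x (hx | hx)
      · exact (hsub hx).1
      · exact hx.1
    have hJhB : ∀ x ∈ Jh, x ∉ B := fun x hx => (hsub hx).2
    have hJred : satReduct J I Q := by
      intro r hr hbI hbJ
      by_cases hdis : r.bodyAtoms ∩ B = ∅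
      · -- body has no omitted atoms
        by_cases hom : Head.omitted B r.head
        · cases hhead : r.head with
          | bot => rw [hhead] at hom; exact hom.elim
          | atom a =>
            rw [hhead] at hom
            have haI : a ∈ I := by
              have := hmod r hr hbI; rw [hhead] at this; exact this
            exact Or.inr ⟨haI, hom⟩
          | choice a =>
            rw [hhead] at hom
            exact fun haI => Or.inr ⟨haI, hom⟩
        · -- the rule is kept unchanged in the abstraction
          have hmem : r ∈ omitA Q B := ⟨r, hr, Or.inl ⟨hdis, hom, rfl⟩⟩
          have hnotB : ∀ x ∈ r.bodyAtoms, x ∉ B := fun x hx hxB =>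
            Set.eq_empty_iff_forall_notMem.mp hdis x ⟨hx, hxB⟩
          have hbIh : bodySat (I \ B) r :=
            ⟨fun x hx => ⟨hbI.1 hx, hnotB x (Or.inl hx)⟩,
             fun a ha haIh => hbI.2 a ha haIh.1⟩
          have hbJh : bodySat Jh r := by
            refine ⟨fun x hx => ?_, fun a ha haJh => hbJ.2 a ha (Or.inl haJh)⟩
            rcases hbJ.1 hx with hxJh | hxIB
            · exact hxJh
            · exact absurd hxIB.2 (hnotB x (Or.inl hx))
          have hhead := hred r hmem hbIh hbJh
          cases hhd : r.head with
          | bot => rw [hhd] at hhead; exact hhead.elim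
          | atom a =>
            rw [hhd] at hhead; exact Or.inl hhead
          | choice a =>
            rw [hhd] at hhead
            intro haI
            by_cases haB : a ∈ B
            · exact Or.inr ⟨haI, haB⟩
            · exact Or.inl (hhead ⟨haI, haB⟩)
      · -- body contains an omitted atom
        by_cases hom : Head.omitted B r.head
        · cases hhead : r.head with
          | bot => rw [hhead] at hom; exact hom.elim
          | atom a =>
            rw [hhead] at hom
            have haI : a ∈ I := by
              have := hmod r hr hbI; rw [hhead] at this; exact this
            exact Or.inr ⟨haI, hom⟩
          | choice a =>
            rw [hhead] at hom
            exact fun haI => Or.inr ⟨haI, hom⟩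
        · by_cases hbot : r.head = Head.bot
          · have := hmod r hr hbI; rw [hbot] at this; exact this.elim
          · -- the rule becomes a choice rule
            set r' : Rule α := ⟨r.head.toChoice, r.pos \ B, r.neg \ B⟩ with hr'
            have hmem : r' ∈ omitA Q B := ⟨r, hr, Or.inr ⟨hdis, hom, hbot, rfl⟩⟩
            have hbIh : bodySat (I \ B) r' := by
              refine ⟨fun x hx => ⟨hbI.1 hx.1, hx.2⟩, fun a ha haIh => hbI.2 a ha.1 haIh.1⟩
            have hbJh : bodySat Jh r' := by
              refine ⟨fun x hx => ?_, fun a ha haJh => hbJ.2 a ha.1 (Or.inl haJh)⟩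
              rcases hbJ.1 hx.1 with hxJh | hxIB
              · exact hxJh
              · exact absurd hxIB.2 hx.2
            have hhead := hred r' hmem hbIh hbJh
            cases hhd : r.head with
            | bot => exact absurd hhd hbot
            | atom a =>
              simp only [hr', hhd, Head.toChoice, headSatReduct] at hhead
              have haI : a ∈ I := by
                have := hmod r hr hbI; rw [hhd] at this; exact this
              by_cases haB : a ∈ B
              · exact Or.inr ⟨haI, haB⟩
              · exact Or.inl (hhead ⟨haI, haB⟩)
            | choice a =>
              simp only [hr', hhd, Head.toChoice, headSatReduct] at hhead
              intro haI
              by_cases haB : a ∈ B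
              · exact Or.inr ⟨haI, haB⟩
              · exact Or.inl (hhead ⟨haI, haB⟩)
    have hJeq : J = I := hmin J hJI hJred
    apply Set.Subset.antisymm hsub
    intro x hx
    have hxJ : x ∈ J := hJeq ▸ hx.1
    rcases hxJ with hxJh | hxIB
    · exact hxJh
    · exact absurd hxIB.2 hx.2

/-- Composing omissions: `omit(omit(P, A'), A) = omit(P, A)` when `A' ⊆ A`. -/
lemma omit_omit (P : Program α) {A' A : Set α} (hs : A' ⊆ A) :
    omitA (omitA P A') A = omitA P A := by
  ext r''
  constructor
  · rintro ⟨r', ⟨r, hr, hrel'⟩, hrel⟩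
    refine ⟨r, hr, ?_⟩
    rcases hrel' with ⟨hdis', hnom', req⟩ | ⟨hne', hnom', hbot', rfl⟩
    · subst req
      exact hrel
    · -- r' = ⟨toChoice, pos \ A', neg \ A'⟩
      have hneA : r.bodyAtoms ∩ A ≠ ∅ := by
        intro h
        apply hne'
        rw [Set.eq_empty_iff_forall_notMem] at h ⊢
        exact fun x hx => h x ⟨hx.1, hs hx.2⟩
      rcases hrel with ⟨hdis2, hnom2, rfl⟩ | ⟨hne2, hnom2, hbot2, heq⟩
      · -- kept unchanged at second stage: bodies disjoint from A
        have hnomA : ¬ Head.omitted A r.head := fun h =>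
          hnom2 ((Head.omitted_toChoice A r.head).mpr h)
        have hbody : ((r.pos \ A') ∪ (r.neg \ A')) ∩ A = ∅ := hdis2
        have hpos : (r.pos \ A') ∩ A = ∅ := by
          rw [Set.eq_empty_iff_forall_notMem] at hbody ⊢
          exact fun x hx => hbody x ⟨Or.inl hx.1, hx.2⟩
        have hneg : (r.neg \ A') ∩ A = ∅ := by
          rw [Set.eq_empty_iff_forall_notMem] at hbody ⊢
          exact fun x hx => hbody x ⟨Or.inr hx.1, hx.2⟩
        refine Or.inr ⟨hneA, hnomA, hbot', ?_⟩
        simp only [diff_eq_of_inter_empty hs hpos, diff_eq_of_inter_empty hs hneg]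
      · -- choice again at second stage
        have hnomA : ¬ Head.omitted A r.head := fun h =>
          hnom2 ((Head.omitted_toChoice A r.head).mpr h)
        refine Or.inr ⟨hneA, hnomA, hbot', ?_⟩
        rw [heq]
        simp only [Head.toChoice_idem, Set.diff_diff,
          Set.union_eq_self_of_subset_left hs]
  · rintro ⟨r, hr, hrel⟩
    rcases hrel with ⟨hdis, hnom, req⟩ | ⟨hne, hnom, hbot, req⟩
    <;> rw [req]
    · -- rule kept unchanged by omit A
      have hdis' : r.bodyAtoms ∩ A' = ∅ := by
        rw [Set.eq_empty_iff_forall_notMem] at hdis ⊢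
        exact fun x hx => hdis x ⟨hx.1, hs hx.2⟩
      have hnom' : ¬ Head.omitted A' r.head := fun h => hnom (Head.omitted_mono hs h)
      exact ⟨r, ⟨r, hr, Or.inl ⟨hdis', hnom', rfl⟩⟩, Or.inl ⟨hdis, hnom, rfl⟩⟩
    · -- rule becomes a choice rule in omit A
      by_cases hdis' : r.bodyAtoms ∩ A' = ∅
      · have hnom' : ¬ Head.omitted A' r.head := fun h => hnom (Head.omitted_mono hs h)
        exact ⟨r, ⟨r, hr, Or.inl ⟨hdis', hnom', rfl⟩⟩,
          Or.inr ⟨hne, hnom, hbot, rfl⟩⟩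
      · have hnom' : ¬ Head.omitted A' r.head := fun h => hnom (Head.omitted_mono hs h)
        have hne' : r.bodyAtoms ∩ A' ≠ ∅ := hdis'
        refine ⟨⟨r.head.toChoice, r.pos \ A', r.neg \ A'⟩,
          ⟨r, hr, Or.inr ⟨hne', hnom', hbot, rfl⟩⟩, ?_⟩
        have hnomA : ¬ Head.omitted A r.head.toChoice := fun h =>
          hnom ((Head.omitted_toChoice A r.head).mp h)
        by_cases hd2 : (⟨r.head.toChoice, r.pos \ A', r.neg \ A'⟩ : Rule α).bodyAtoms ∩ A = ∅
        · refine Or.inl ⟨hd2, hnomA, ?_⟩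
          have hbody : ((r.pos \ A') ∪ (r.neg \ A')) ∩ A = ∅ := hd2
          have hpos : (r.pos \ A') ∩ A = ∅ := by
            rw [Set.eq_empty_iff_forall_notMem] at hbody ⊢
            exact fun x hx => hbody x ⟨Or.inl hx.1, hx.2⟩
          have hneg : (r.neg \ A') ∩ A = ∅ := by
            rw [Set.eq_empty_iff_forall_notMem] at hbody ⊢
            exact fun x hx => hbody x ⟨Or.inr hx.1, hx.2⟩
          simp only [diff_eq_of_inter_empty hs hpos, diff_eq_of_inter_empty hs hneg]
        · refine Or.inr ⟨hd2, hnomA, Head.toChoice_ne_bot hbot, ?_⟩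
          simp only [Head.toChoice_idem, Set.diff_diff,
            Set.union_eq_self_of_subset_left hs]

end Aux

/-- unsatisfiable abstractions are refinement-safe faithful:
if `omit(P, A)` is unsatisfiable, then for every `A' ⊆ A` the abstraction
`omit(P, A')` has no spurious answer sets, i.e. every `Î ∈ AS(omit(P, A'))`
is of the form `I ∩ (𝒜 \ A')` for some `I ∈ AS(P)`. -/
theorem unsat_refinement_safe_faithful {α : Type u} (P : Program α) (𝒜 A : Set α)
    (h𝒜 : 𝒜.Finite) (hnorm : IsNormal P) (hP : ProgramOver P 𝒜)
    (hA : A ⊆ 𝒜) (hunsat : AS (omitA P A) = ∅) :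
    ∀ A' ⊆ A, ∀ Ihat ∈ AS (omitA P A'),
      Ihat ∈ (fun I => I ∩ (𝒜 \ A')) '' AS P := by
  intro A' hA' Ihat hIhat
  exfalso
  have h1 : isAnswerSet (omitA (omitA P A') A) (Ihat \ A) := project _ A hIhat
  rw [omit_omit P hA'] at h1
  have : (Ihat \ A) ∈ AS (omitA P A) := h1
  rw [hunsat] at this
  exact this

end ASP
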